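/- Let A be the 6×6 matrix with rows (0,0,1,0,0,0), (0,1,0,0,0,0), (1,−1,0,1,0,0), (0,1,−1,0,0,1), (0,0,1,−1,1,0), (0,0,0,1,0,0), viewed over ℚ. Then A is an alternating sign matrix, A has finite multiplicative order equal to 12, the minimum polynomial of A is (x−1)(x^4−x^2+1), and A is not similar over ℚ to any 6×6 permutation matrix. -/

import Mathlib

/-! `A` is annihilated by `(X - 1) * (X ^ 4 - X ^ 2 + 1)`, while `1, A, …, A ^ 4` are linearly
independent (already their first rows are), so this product is the minimal polynomial. Similar
matrices have the same order, and a permutation matrix has the order of its permutation, which is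
the lcm of its cycle lengths. In `S₆` that lcm is never 12: it would need a cycle of length
divisible by 4 and a different one of length divisible by 3, i.e. at least 7 points. -/

open Polynomial

/-- `Ccyc k` is the `k × k` companion matrix of `x^k - 1`: the permutation matrix with `1`
in (1-based) positions `(i+1, i)` for `1 ≤ i ≤ k-1` and in position `(1, k)`. -/
def Ccyc (k : ℕ) : Matrix (Fin k) (Fin k) ℚ :=
  Matrix.of fun r c => if (r : ℕ) = ((c : ℕ) + 1) % k then 1 else 0

/-- `Tblock n i1 j1 i2 j2` is the `n × n` matrix with entry `1` in (1-based) positions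
`(i1, j1)` and `(i2, j2)`, entry `-1` in positions `(i1, j2)` and `(i2, j1)`, and `0`
elsewhere. -/
def Tblock (n i1 j1 i2 j2 : ℕ) : Matrix (Fin n) (Fin n) ℚ :=
  Matrix.of fun r c =>
    (if (r : ℕ) + 1 = i1 ∧ (c : ℕ) + 1 = j1 then (1 : ℚ) else 0)
      + (if (r : ℕ) + 1 = i2 ∧ (c : ℕ) + 1 = j2 then (1 : ℚ) else 0)
      - (if (r : ℕ) + 1 = i1 ∧ (c : ℕ) + 1 = j2 then (1 : ℚ) else 0)
      - (if (r : ℕ) + 1 = i2 ∧ (c : ℕ) + 1 = j1 then (1 : ℚ) else 0)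

/-- Matrix direct sum (block diagonal sum), realized on `Fin (p + q)`. -/
def dsum {p q : ℕ} (A : Matrix (Fin p) (Fin p) ℚ) (B : Matrix (Fin q) (Fin q) ℚ) :
    Matrix (Fin (p + q)) (Fin (p + q)) ℚ :=
  Matrix.reindex finSumFinEquiv finSumFinEquiv (Matrix.fromBlocks A 0 0 B)

/-- A square rational matrix has finite multiplicative order if `A ^ t = 1` for some `t > 0`. -/
def HasFinOrder {n : ℕ} (A : Matrix (Fin n) (Fin n) ℚ) : Prop :=
  ∃ t : ℕ, 0 < t ∧ A ^ t = 1

/-- `OrderIs A t` : `t` is the least positive integer with `A ^ t = 1`. -/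
def OrderIs {n : ℕ} (A : Matrix (Fin n) (Fin n) ℚ) (t : ℕ) : Prop :=
  IsLeast {s : ℕ | 0 < s ∧ A ^ s = 1} t

/-- Alternating sign matrix: entries in `{0, 1, -1}`, all partial row- and column-sums equal
`0` or `1`, and every full row and column sums to `1`. -/
def IsASM {n : ℕ} (A : Matrix (Fin n) (Fin n) ℚ) : Prop :=
  (∀ i j : Fin n, A i j = 0 ∨ A i j = 1 ∨ A i j = -1) ∧
  (∀ i k : Fin n, (∑ j ∈ Finset.Iic k, A i j) = 0 ∨ (∑ j ∈ Finset.Iic k, A i j) = 1) ∧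
  (∀ j k : Fin n, (∑ i ∈ Finset.Iic k, A i j) = 0 ∨ (∑ i ∈ Finset.Iic k, A i j) = 1) ∧
  (∀ i : Fin n, (∑ j, A i j) = 1) ∧
  (∀ j : Fin n, (∑ i, A i j) = 1)

/-- Permutation matrix. -/
def IsPermMat {n : ℕ} (A : Matrix (Fin n) (Fin n) ℚ) : Prop :=
  ∃ σ : Equiv.Perm (Fin n), ∀ i j, A i j = if σ i = j then 1 else 0

/-- `A` is permutation similar to an alternating sign matrix:
`Pᵀ * A * P` is an ASM for some permutation matrix `P`. -/
def PermSimilarToASM {n : ℕ} (A : Matrix (Fin n) (Fin n) ℚ) : Prop :=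
  ∃ P B : Matrix (Fin n) (Fin n) ℚ, IsPermMat P ∧ IsASM B ∧ B = P.transpose * A * P

/-- Similarity over `ℚ`. -/
def SimilarQ {n : ℕ} (A B : Matrix (Fin n) (Fin n) ℚ) : Prop :=
  ∃ S : Matrix (Fin n) (Fin n) ℚ, IsUnit S ∧ B = S⁻¹ * A * S

/-- A `T`-block: a matrix of the form `± T(i1, j1, i2, j2)` with `i1 ≠ i2`, `j1 ≠ j2`. -/
def IsTBlock {n : ℕ} (M : Matrix (Fin n) (Fin n) ℚ) : Prop :=
  ∃ i1 j1 i2 j2 : ℕ, 1 ≤ i1 ∧ i1 ≤ n ∧ 1 ≤ j1 ∧ j1 ≤ n ∧ 1 ≤ i2 ∧ i2 ≤ n ∧ 1 ≤ j2 ∧ j2 ≤ n ∧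
    i1 ≠ i2 ∧ j1 ≠ j2 ∧ (M = Tblock n i1 j1 i2 j2 ∨ M = -Tblock n i1 j1 i2 j2)

open Equiv Matrix

theorem Multiset.lcm_ne_twelve_of_sum_le_six {s : Multiset ℕ} (hs : s.sum ≤ 6) : s.lcm ≠ 12 := by
  intro h12
  have hle : ∀ a ∈ s, a ≤ 6 := fun a ha => (le_sum_of_mem ha).trans hs
  have hdvd : ∀ a ∈ s, a ∣ 12 := fun a ha => h12 ▸ dvd_lcm ha
  have hnot_dvd : ∀ m, ¬ 12 ∣ m → ∃ a ∈ s, ¬ a ∣ m := fun m hm => by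
    by_contra! hall
    exact hm (h12 ▸ lcm_dvd.2 hall)
  obtain ⟨a, ha, ha6⟩ := hnot_dvd 6 (by norm_num)
  obtain ⟨b, hb, hb4⟩ := hnot_dvd 4 (by norm_num)
  obtain rfl : a = 4 := by
    have := hle a ha; have := hdvd a ha; interval_cases a <;> omega
  have hb_eq : b = 3 ∨ b = 6 := by
    have := hle b hb; have := hdvd b hb; interval_cases b <;> omega
  have hsum : 4 + b ≤ s.sum := by
    rw [← sum_erase ha]
    exact Nat.add_le_add_left (le_sum_of_mem ((mem_erase_of_ne (by omega)).2 hb)) 4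
  omega

theorem Equiv.Perm.orderOf_ne_twelve {α : Type*} [Fintype α] [DecidableEq α]
    (hα : Fintype.card α ≤ 6) (σ : Perm α) : orderOf σ ≠ 12 := by
  rw [← σ.lcm_cycleType]
  refine Multiset.lcm_ne_twelve_of_sum_le_six ?_
  rw [σ.sum_cycleType]
  exact (Finset.card_le_univ _).trans hα

theorem Equiv.Perm.orderOf_permMatrix {n R : Type*} [Fintype n] [DecidableEq n]
    [Semiring R] [Nontrivial R] (σ : Perm n) :
    orderOf (σ.permMatrix R) = orderOf σ := by
  have hinj : Function.Injective (Matrix.permMatrixHom (n := n) (R := R)) := fun σ τ h =>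
    inv_injective <| Equiv.ext fun i =>
      Option.some_injective _ (congrFun (congrArg DFunLike.coe (PEquiv.toMatrix_injective h)) i)
  simpa using orderOf_injective _ hinj σ⁻¹

theorem Matrix.linearIndependent_rows_of_mul_eq_one {m n R : Type*} [Fintype m] [Fintype n]
    [DecidableEq m] [Ring R] {M : Matrix m n R} {N : Matrix n m R} (h : M * N = 1) :
    LinearIndependent R M.row := by
  refine Fintype.linearIndependent_iff.2 fun g hg => congrFun ?_
  have hgM : g ᵥ* M = 0 := (vecMul_eq_sum g M).trans hg
  rw [← vecMul_one g, ← h, ← vecMul_vecMul, hgM, zero_vecMul, Pi.zero_def]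

theorem orderIs_of_orderOf_eq {n t : ℕ} {A : Matrix (Fin n) (Fin n) ℚ} (ht : 0 < t)
    (h : orderOf A = t) : OrderIs A t :=
  ⟨⟨ht, h ▸ pow_orderOf_eq_one A⟩, fun _ ⟨hs, hAs⟩ => h ▸ orderOf_le_of_pow_eq_one hs hAs⟩

theorem IsPermMat.exists_eq_permMatrix {n : ℕ} {B : Matrix (Fin n) (Fin n) ℚ} (h : IsPermMat B) :
    ∃ σ : Perm (Fin n), B = σ.permMatrix ℚ := by
  obtain ⟨σ, hσ⟩ := h
  exact ⟨σ, Matrix.ext fun i j => by simp [hσ, PEquiv.toMatrix_apply]⟩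

theorem SimilarQ.orderOf_eq {n : ℕ} {A B : Matrix (Fin n) (Fin n) ℚ} (h : SimilarQ A B) :
    orderOf B = orderOf A := by
  obtain ⟨S, hS, rfl⟩ := h
  lift S to (Matrix (Fin n) (Fin n) ℚ)ˣ using hS with u
  rw [← Matrix.coe_units_inv, orderOf_eq_orderOf_iff]
  intro k
  rw [Units.conj_pow', mul_assoc, Units.inv_mul_eq_iff_eq_mul, mul_one, u.isUnit.mul_eq_right]

def asm12 : Matrix (Fin 6) (Fin 6) ℚ :=
  !![0, 0, 1, 0, 0, 0;
     0, 1, 0, 0, 0, 0;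
     1, -1, 0, 1, 0, 0;
     0, 1, -1, 0, 0, 1;
     0, 0, 1, -1, 1, 0;
     0, 0, 0, 1, 0, 0]

theorem isASM_asm12 : IsASM asm12 := by
  unfold IsASM asm12
  simp only [of_apply]
  decide +kernel

theorem orderOf_asm12 : orderOf asm12 = 12 :=
  (orderOf_eq_iff (by norm_num)).2 ⟨by decide +kernel, by decide +kernel⟩

theorem linearIndependent_pow_asm12 :
    LinearIndependent ℚ fun i : Fin 5 => asm12 ^ (i : ℕ) := by
  let K : Matrix (Fin 5) (Fin 6) ℚ := of fun i => (asm12 ^ (i : ℕ)) 0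
  let N : Matrix (Fin 6) (Fin 5) ℚ :=
    !![1, 0, 0, 0, 0;
       1, 0, -1, 0, 1;
       0, 1, 0, 0, 0;
       0, 0, 0, 0, 1;
       0, 0, 0, 0, 0;
       0, 0, 0, 1, 0]
  have hKN : K * N = 1 := by decide +kernel
  exact (linearIndependent_rows_of_mul_eq_one hKN).of_comp (LinearMap.proj 0)

theorem minpoly_asm12 : minpoly ℚ asm12 = (X - 1) * (X ^ 4 - X ^ 2 + 1) := by
  refine minpoly.eq_of_linearIndependent ℚ asm12 (by monicity!) ?_ 5 (by compute_degree!)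
    linearIndependent_pow_asm12
  simp only [map_mul, map_sub, map_add, map_pow, aeval_X, map_one]
  decide +kernel

theorem stmt19 (A : Matrix (Fin 6) (Fin 6) ℚ)
    (hA : A = !![0, 0, 1, 0, 0, 0;
                 0, 1, 0, 0, 0, 0;
                 1, -1, 0, 1, 0, 0;
                 0, 1, -1, 0, 0, 1;
                 0, 0, 1, -1, 1, 0;
                 0, 0, 0, 1, 0, 0]) :
    IsASM A ∧ OrderIs A 12 ∧
      minpoly ℚ A = (X - 1) * (X ^ 4 - X ^ 2 + 1) ∧
      ¬ ∃ B : Matrix (Fin 6) (Fin 6) ℚ, IsPermMat B ∧ SimilarQ A B := by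
  obtain rfl : A = asm12 := hA
  refine ⟨isASM_asm12, orderIs_of_orderOf_eq (by norm_num) orderOf_asm12, minpoly_asm12, ?_⟩
  rintro ⟨B, hB, hAB⟩
  obtain ⟨σ, rfl⟩ := hB.exists_eq_permMatrix
  refine σ.orderOf_ne_twelve (by simp) ?_
  rw [← σ.orderOf_permMatrix (R := ℚ), hAB.orderOf_eq, orderOf_asm12]
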